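/- Let A, B be n×n real positive definite matrices and α ≠ 0. Then (1/α²)·∑_{i=1}^n (λ_i(B)^α/λ_i(A)^α − log(λ_i(B)^α/λ_i(A)^α) − 1) ≤ (1/α²)·(Tr((BA^{−1})^α − I) − α·log det(BA^{−1})) ≤ (1/α²)·∑_{i=1}^n (λ_{n−i+1}(B)^α/λ_i(A)^α − log(λ_{n−i+1}(B)^α/λ_i(A)^α) − 1). -/

import Mathlib

/-- The vector `u` sorted in non-decreasing order. -/
noncomputable def sortAsc {n : ℕ} (u : Fin n → ℝ) : Fin n → ℝ := u ∘ Tuple.sort u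

/-- The vector `u` sorted in non-increasing order. -/
noncomputable def sortDesc {n : ℕ} (u : Fin n → ℝ) : Fin n → ℝ := sortAsc u ∘ Fin.rev


/-- The eigenvalues of a Hermitian real matrix, in non-increasing order. -/
noncomputable def eigDesc {n : ℕ} {A : Matrix (Fin n) (Fin n) ℝ} (hA : A.IsHermitian) :
    Fin n → ℝ :=
  sortDesc hA.eigenvalues


/-- The matrix logarithm (via the continuous functional calculus; the genuine
matrix logarithm on symmetric positive definite matrices). -/
noncomputable def mLog {n : ℕ} (M : Matrix (Fin n) (Fin n) ℝ) : Matrix (Fin n) (Fin n) ℝ :=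
  cfc Real.log M

/-- Real matrix power (via the continuous functional calculus; agrees with the
spectral-decomposition definition on symmetric positive (semi)definite matrices). -/
noncomputable def mPow {n : ℕ} (M : Matrix (Fin n) (Fin n) ℝ) (q : ℝ) :
    Matrix (Fin n) (Fin n) ℝ :=
  cfc (fun t : ℝ => t ^ q) M


/-!
Let `M = A^{-1/2} B A^{-1/2}` with eigenvalues `μ₁ ≥ ⋯ ≥ μₙ`, and `g(s) = e^{αs} - αs - 1`. The
middle quantity is `Σ g(log μᵢ)` and the outer sums are `Σ g(log bᵢ - log aᵢ)` and
`Σ g(log b_{n-i+1} - log aᵢ)`. Since `B = A^{1/2} M A^{1/2}` and `M = A^{-1/2} B A^{-1/2}`, the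
multiplicative Lidskii inequality gives the log-majorizations
`(log bᵢ - log aᵢ) ≺ (log μᵢ) ≺ (log bᵢ - log a_{n-i+1})`, and Karamata's inequality for the convex
function `g` turns them into the two bounds. Lidskii's inequality in turn comes from Weyl's
monotonicity theorem applied to `Wᴴ max(Y, λₖ(Y)) W`, which dominates both `Wᴴ Y W` and `λₖ(Y) WᴴW`.
-/

open Finset Matrix Polynomial Module
open scoped InnerProductSpace MatrixOrder

theorem monotone_of_forall_add_mul_sub_le {f g : ℝ → ℝ} (hfg : ∀ a b, f a + g a * (b - a) ≤ f b) :
    Monotone g := by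
  intro a b hab
  rcases hab.eq_or_lt with rfl | hlt
  · exact le_rfl
  · nlinarith [hfg a b, hfg b a]

section Karamata

variable {ι : Type*} [LinearOrder ι]

theorem Antitone.mul_sum_le_sum_mul {c d : ι → ℝ} (hc : Antitone c) {s : Finset ι}
    (hd : ∀ k ∈ s, 0 ≤ ∑ i ∈ s with i ≤ k, d i) {b : ι} (hb : ∀ i ∈ s, i ≤ b) :
    c b * ∑ i ∈ s, d i ≤ ∑ i ∈ s, c i * d i := by
  induction s using Finset.induction_on_max generalizing b with
  | empty => simp
  | insert a s has ih =>
    have ha : a ∉ s := fun h => lt_irrefl a (has a h)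
    have hs : ∀ k ∈ s, 0 ≤ ∑ i ∈ s with i ≤ k, d i := fun k hk => by
      simpa [filter_insert, not_le.mpr (has k hk)] using hd k (mem_insert_of_mem hk)
    have htot : 0 ≤ ∑ i ∈ s, d i + d a := by
      have := hd a (mem_insert_self a s)
      rwa [filter_insert, if_pos le_rfl, filter_true_of_mem fun i hi => (has i hi).le,
        sum_insert ha, add_comm] at this
    have hab : c b ≤ c a := hc (hb a (mem_insert_self a s))
    have ih' := ih hs fun i hi => (has i hi).le
    rw [sum_insert ha, sum_insert ha]
    nlinarith

variable [Fintype ι] [LocallyFiniteOrderBot ι]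

theorem sum_sub_eq_sum_Iic_of_antitone {y : ι → ℝ} (hy : Antitone y) (φ : ℝ → ℝ) (k : ι) :
    ∑ j, (φ (max (y j) (y k)) - φ (y k)) = ∑ j ∈ Iic k, (φ (y j) - φ (y k)) := by
  rw [← sum_subset (subset_univ (Iic k)) fun j _ hj => ?_]
  · exact sum_congr rfl fun j hj => by rw [max_eq_left (hy (mem_Iic.mp hj))]
  · rw [max_eq_right (hy (not_le.mp (mem_Iic.not.mp hj)).le), sub_self]

/-- Karamata's inequality, in the Tomić–Weyl form. -/
theorem sum_le_sum_of_sum_Iic_le {f g : ℝ → ℝ} (hfg : ∀ a b, f a + g a * (b - a) ≤ f b)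
    {x y : ι → ℝ} (hx : Antitone x) (hxy : ∀ k, ∑ i ∈ Iic k, x i ≤ ∑ i ∈ Iic k, y i)
    (htot : ∑ i, x i = ∑ i, y i) : ∑ i, f (x i) ≤ ∑ i, f (y i) := by
  have habel : 0 ≤ ∑ i, g (x i) * (y i - x i) := by
    rcases isEmpty_or_nonempty ι with _ | _
    · simp
    have := ((monotone_of_forall_add_mul_sub_le hfg).comp_antitone hx).mul_sum_le_sum_mul
      (d := fun i => y i - x i) (s := univ) (b := univ.max' univ_nonempty) (fun k _ => ?_)
      fun i _ => le_max' univ i (mem_univ i)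
    · simpa [sum_sub_distrib, htot] using this
    · simpa [filter_ge_eq_Iic, sum_sub_distrib] using hxy k
  calc ∑ i, f (x i) ≤ ∑ i, (f (x i) + g (x i) * (y i - x i)) := by
        rw [sum_add_distrib]
        linarith
    _ ≤ ∑ i, f (y i) := sum_le_sum fun i _ => hfg _ _

end Karamata

section Weyl

variable {𝕜 E : Type*} [RCLike 𝕜] [NormedAddCommGroup E] [InnerProductSpace 𝕜 E]

namespace OrthonormalBasis

variable {ι : Type*} [Fintype ι] (b : OrthonormalBasis ι 𝕜 E)

theorem repr_apply_eq_zero_of_mem_span {s : Set ι} {v : E}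
    (hv : v ∈ Submodule.span 𝕜 (b '' s)) {i : ι} (hi : i ∉ s) : b.repr v i = 0 := by
  rw [← b.coe_toBasis, Module.Basis.mem_span_image] at hv
  simpa using fun h => hi (hv h)

theorem finrank_span_image (s : Finset ι) :
    finrank 𝕜 (Submodule.span 𝕜 (b '' s)) = #s := by
  rw [Set.image_eq_range]
  exact (finrank_span_eq_card (b.toBasis.linearIndependent.comp _ Subtype.val_injective)).trans
    (Fintype.card_coe s)

end OrthonormalBasis

theorem LinearMap.re_inner_le_re_inner_of_le {T S : E →ₗ[𝕜] E} (hTS : T ≤ S) (v : E) :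
    RCLike.re ⟪T v, v⟫_𝕜 ≤ RCLike.re ⟪S v, v⟫_𝕜 := by
  have := ((LinearMap.le_def T S).mp hTS).re_inner_nonneg_left v
  rwa [LinearMap.sub_apply, inner_sub_left, map_sub, sub_nonneg] at this

variable [FiniteDimensional 𝕜 E] {n : ℕ} {T S : E →ₗ[𝕜] E}

namespace LinearMap.IsSymmetric

theorem re_inner_apply_self_eq_sum (hT : T.IsSymmetric) (hn : finrank 𝕜 E = n) (v : E) :
    RCLike.re ⟪T v, v⟫_𝕜 =
      ∑ i, hT.eigenvalues hn i * ‖(hT.eigenvectorBasis hn).repr v i‖ ^ 2 := by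
  rw [← (hT.eigenvectorBasis hn).repr.inner_map_map, PiLp.inner_apply, map_sum]
  refine sum_congr rfl fun i _ => ?_
  rw [eigenvectorBasis_apply_self_apply, ← smul_eq_mul, inner_smul_left, RCLike.conj_ofReal,
    inner_self_eq_norm_sq_to_K, ← RCLike.ofReal_pow, ← RCLike.ofReal_mul, RCLike.ofReal_re]

theorem mul_norm_sq_le_re_inner_of_mem_span (hT : T.IsSymmetric) (hn : finrank 𝕜 E = n)
    {s : Set (Fin n)} {c : ℝ} (hc : ∀ i ∈ s, c ≤ hT.eigenvalues hn i) {v : E}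
    (hv : v ∈ Submodule.span 𝕜 (hT.eigenvectorBasis hn '' s)) :
    c * ‖v‖ ^ 2 ≤ RCLike.re ⟪T v, v⟫_𝕜 := by
  rw [hT.re_inner_apply_self_eq_sum hn, ← (hT.eigenvectorBasis hn).repr.norm_map,
    EuclideanSpace.norm_sq_eq, mul_sum]
  refine sum_le_sum fun i _ => ?_
  by_cases hi : i ∈ s
  · exact mul_le_mul_of_nonneg_right (hc i hi) (sq_nonneg _)
  · simp [OrthonormalBasis.repr_apply_eq_zero_of_mem_span _ hv hi]

theorem re_inner_le_mul_norm_sq_of_mem_span (hT : T.IsSymmetric) (hn : finrank 𝕜 E = n)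
    {s : Set (Fin n)} {c : ℝ} (hc : ∀ i ∈ s, hT.eigenvalues hn i ≤ c) {v : E}
    (hv : v ∈ Submodule.span 𝕜 (hT.eigenvectorBasis hn '' s)) :
    RCLike.re ⟪T v, v⟫_𝕜 ≤ c * ‖v‖ ^ 2 := by
  rw [hT.re_inner_apply_self_eq_sum hn, ← (hT.eigenvectorBasis hn).repr.norm_map,
    EuclideanSpace.norm_sq_eq, mul_sum]
  refine sum_le_sum fun i _ => ?_
  by_cases hi : i ∈ s
  · exact mul_le_mul_of_nonneg_right (hc i hi) (sq_nonneg _)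
  · simp [OrthonormalBasis.repr_apply_eq_zero_of_mem_span _ hv hi]

/-- Weyl's monotonicity theorem: the eigenvector spans for `λ₁(T), …, λᵢ(T)` and for
`λᵢ(S), …, λₙ(S)` have dimensions adding up to `n + 1`, so they share a nonzero vector. -/
theorem eigenvalues_le_of_le (hT : T.IsSymmetric) (hS : S.IsSymmetric) (hn : finrank 𝕜 E = n)
    (hTS : T ≤ S) (i : Fin n) : hT.eigenvalues hn i ≤ hS.eigenvalues hn i := by
  set V := Submodule.span 𝕜 (hT.eigenvectorBasis hn '' ↑(Iic i))
  set W := Submodule.span 𝕜 (hS.eigenvectorBasis hn '' ↑(Ici i))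
  obtain ⟨v, hvV, hvW, hv⟩ : ∃ v ∈ V, v ∈ W ∧ v ≠ 0 := by
    by_contra! h
    have := Submodule.finrank_add_finrank_le_of_disjoint (Submodule.disjoint_def.mpr h)
    rw [OrthonormalBasis.finrank_span_image, OrthonormalBasis.finrank_span_image, Fin.card_Iic,
      Fin.card_Ici, hn] at this
    omega
  have hT' := hT.mul_norm_sq_le_re_inner_of_mem_span hn
    (fun j hj => hT.eigenvalues_antitone hn (mem_Iic.mp hj)) hvV
  have hS' := hS.re_inner_le_mul_norm_sq_of_mem_span hn
    (fun j hj => hS.eigenvalues_antitone hn (mem_Ici.mp hj)) hvW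
  exact le_of_mul_le_mul_right ((hT'.trans (LinearMap.re_inner_le_re_inner_of_le hTS v)).trans hS')
    (by positivity)

end LinearMap.IsSymmetric

end Weyl

section CharpolyRoots

variable {ι R : Type*} [Fintype ι] [CommRing R] [IsDomain R]

theorem Polynomial.roots_prod_univ_X_sub_C (w : ι → R) :
    (∏ i, (X - C (w i))).roots = univ.val.map w := by
  rw [prod_eq_multiset_prod, ← roots_multiset_prod_X_sub_C (univ.val.map w),
    Multiset.map_map]
  rfl

variable [DecidableEq ι] {A : Matrix ι ι R} {w : ι → R}

theorem Matrix.splits_charpoly_of_eq_prod (h : A.charpoly = ∏ i, (X - C (w i))) :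
    A.charpoly.Splits :=
  splits_iff_card_roots.mpr (by simp [h, roots_prod_univ_X_sub_C])

theorem Matrix.trace_eq_sum_of_charpoly_eq (h : A.charpoly = ∏ i, (X - C (w i))) :
    A.trace = ∑ i, w i := by
  rw [trace_eq_sum_roots_charpoly_of_splits (splits_charpoly_of_eq_prod h), h,
    roots_prod_univ_X_sub_C, sum_eq_multiset_sum]

theorem Matrix.det_eq_prod_of_charpoly_eq (h : A.charpoly = ∏ i, (X - C (w i))) :
    A.det = ∏ i, w i := by
  rw [det_eq_prod_roots_charpoly_of_splits (splits_charpoly_of_eq_prod h), h,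
    roots_prod_univ_X_sub_C, prod_eq_multiset_prod]

end CharpolyRoots

variable {n : ℕ}

@[to_additive]
theorem prod_comp_sortDesc {M : Type*} [CommMonoid M] (u : Fin n → ℝ) (f : ℝ → M) :
    ∏ i, f (sortDesc u i) = ∏ i, f (u i) :=
  Equiv.prod_comp (Fin.revPerm.trans (Tuple.sort u)) (f ∘ u)

theorem antitone_sortDesc (u : Fin n → ℝ) : Antitone (sortDesc u) :=
  (Tuple.monotone_sort u).comp_antitone fun _ _ h => Fin.rev_le_rev.mpr h

theorem exists_perm_sortDesc_eq (u : Fin n → ℝ) :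
    ∃ σ : Equiv.Perm (Fin n), sortDesc u = u ∘ σ :=
  ⟨Fin.revPerm.trans (Tuple.sort u), rfl⟩

section EigDesc

variable {A B : Matrix (Fin n) (Fin n) ℝ}

theorem eigDesc_congr (hAB : A = B) (hA : A.IsHermitian) (hB : B.IsHermitian) :
    eigDesc hA = eigDesc hB := by
  subst hAB
  rfl

theorem antitone_eigDesc (hA : A.IsHermitian) : Antitone (eigDesc hA) :=
  antitone_sortDesc _

theorem eigDesc_pos (hA : A.PosDef) (i : Fin n) : 0 < eigDesc hA.1 i :=
  hA.eigenvalues_pos _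

theorem charpoly_cfc_eq_prod_eigDesc (hA : A.IsHermitian) (f : ℝ → ℝ) :
    (cfc f A).charpoly = ∏ i, (X - C (f (eigDesc hA i))) := by
  simp only [hA.charpoly_cfc_eq, RCLike.ofReal_real_eq_id, id]
  exact (prod_comp_sortDesc hA.eigenvalues fun s => X - C (f s)).symm

theorem charpoly_eq_prod_eigDesc (hA : A.IsHermitian) :
    A.charpoly = ∏ i, (X - C (eigDesc hA i)) := by
  simpa [cfc_id ℝ A hA.isSelfAdjoint] using charpoly_cfc_eq_prod_eigDesc hA id

theorem eigDesc_eq_of_charpoly_eq (hA : A.IsHermitian) {w : Fin n → ℝ} (hw : Antitone w)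
    (h : A.charpoly = ∏ i, (X - C (w i))) : eigDesc hA = w := by
  have hroots := congrArg roots ((charpoly_eq_prod_eigDesc hA).symm.trans h)
  simp only [roots_prod_univ_X_sub_C, Fin.univ_val_map, Multiset.coe_eq_coe] at hroots
  exact List.ofFn_injective <|
    hroots.eq_of_sortedGE (antitone_sortDesc _).sortedGE_ofFn hw.sortedGE_ofFn

theorem eigDesc_cfc_eq_of_antitone (hA : A.IsHermitian) {f : ℝ → ℝ} {σ : Equiv.Perm (Fin n)}
    (hf : Antitone (f ∘ eigDesc hA ∘ σ)) (h : (cfc f A).IsHermitian) :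
    eigDesc h = f ∘ eigDesc hA ∘ σ :=
  eigDesc_eq_of_charpoly_eq h hf <| (charpoly_cfc_eq_prod_eigDesc hA f).trans
    (Equiv.prod_comp σ fun i => X - C (f (eigDesc hA i))).symm

theorem eigDesc_cfc_of_monotone (hA : A.IsHermitian) {f : ℝ → ℝ} (hf : Monotone f)
    (h : (cfc f A).IsHermitian) : eigDesc h = f ∘ eigDesc hA :=
  eigDesc_cfc_eq_of_antitone hA (σ := 1) (hf.comp_antitone (antitone_sortDesc _)) h

theorem trace_cfc_eq_sum_eigDesc (hA : A.IsHermitian) (f : ℝ → ℝ) :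
    (cfc f A).trace = ∑ i, f (eigDesc hA i) :=
  trace_eq_sum_of_charpoly_eq (charpoly_cfc_eq_prod_eigDesc hA f)

theorem det_eq_prod_eigDesc (hA : A.IsHermitian) : A.det = ∏ i, eigDesc hA i :=
  det_eq_prod_of_charpoly_eq (charpoly_eq_prod_eigDesc hA)

theorem sum_log_eigDesc_of_det_ne_zero (hA : A.IsHermitian) (hdet : A.det ≠ 0) :
    ∑ i, Real.log (eigDesc hA i) = Real.log A.det := by
  rw [det_eq_prod_eigDesc hA] at hdet ⊢
  exact (Real.log_prod fun i _ => (prod_ne_zero_iff.mp hdet) i (mem_univ i)).symm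

theorem sum_log_eigDesc (hA : A.PosDef) : ∑ i, Real.log (eigDesc hA.1 i) = Real.log A.det :=
  sum_log_eigDesc_of_det_ne_zero hA.1 hA.det_pos.ne'

theorem inv_eq_cfc_inv (hA : A.PosDef) : A⁻¹ = cfc (fun t : ℝ => t⁻¹) A := by
  refine inv_eq_left_inv ?_
  conv_lhs => rhs; rw [← cfc_id' ℝ A hA.1.isSelfAdjoint]
  rw [← cfc_mul _ _ A (A.finite_real_spectrum.continuousOn _), ← cfc_one ℝ A hA.1.isSelfAdjoint]
  exact cfc_congr fun x hx => inv_mul_cancel₀ (hA.isStrictlyPositive.spectrum_pos hx).ne'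

theorem eigDesc_inv (hA : A.PosDef) (h : A⁻¹.IsHermitian) (i : Fin n) :
    eigDesc h i = (eigDesc hA.1 i.rev)⁻¹ := by
  have hanti : Antitone ((fun t : ℝ => t⁻¹) ∘ eigDesc hA.1 ∘ Fin.revPerm) := fun i j hij =>
    inv_anti₀ (eigDesc_pos hA _) (antitone_eigDesc _ (Fin.rev_le_rev.mpr hij))
  have h' : (cfc (fun t : ℝ => t⁻¹) A).IsHermitian := inv_eq_cfc_inv hA ▸ h
  rw [eigDesc_congr (inv_eq_cfc_inv hA) h h', eigDesc_cfc_eq_of_antitone hA.1 hanti h']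
  rfl

theorem eigDesc_smul (hA : A.IsHermitian) {t : ℝ} (ht : 0 ≤ t) (h : (t • A).IsHermitian)
    (i : Fin n) : eigDesc h i = t * eigDesc hA i := by
  have h' : (cfc (fun x => t * x) A).IsHermitian := by rwa [cfc_const_mul_id t A hA.isSelfAdjoint]
  rw [eigDesc_congr (cfc_const_mul_id t A hA.isSelfAdjoint).symm h h',
    eigDesc_cfc_of_monotone hA (fun x y hxy => mul_le_mul_of_nonneg_left hxy ht) h']
  rfl

theorem eigDesc_eq_eigenvalues_toEuclideanLin (hA : A.IsHermitian) :
    eigDesc hA =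
      (isSymmetric_toEuclideanLin_iff.mpr hA).eigenvalues finrank_euclideanSpace_fin := by
  refine eigDesc_eq_of_charpoly_eq hA (LinearMap.IsSymmetric.eigenvalues_antitone _ _) ?_
  have hchar : (toEuclideanLin A).charpoly = A.charpoly := by
    rw [toEuclideanLin_eq_toLin_orthonormal, charpoly_toLin]
  simpa [hchar] using (isSymmetric_toEuclideanLin_iff.mpr hA).charpoly_eq finrank_euclideanSpace_fin

theorem eigDesc_le_eigDesc_of_le (hA : A.IsHermitian) (hB : B.IsHermitian) (hAB : A ≤ B)
    (i : Fin n) : eigDesc hA i ≤ eigDesc hB i := by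
  rw [eigDesc_eq_eigenvalues_toEuclideanLin, eigDesc_eq_eigenvalues_toEuclideanLin]
  refine LinearMap.IsSymmetric.eigenvalues_le_of_le _ _ _ ?_ i
  rw [LinearMap.le_def, ← map_sub, isPositive_toEuclideanLin_iff]
  exact Matrix.le_iff.mp hAB

end EigDesc

theorem exists_isHermitian_ge_conj_and_ge_smul {W X Y : Matrix (Fin n) (Fin n) ℝ}
    (hY : Y.IsHermitian) (hWX : Wᴴ * W = X) (t : ℝ) :
    ∃ Z : Matrix (Fin n) (Fin n) ℝ, Z.IsHermitian ∧ Wᴴ * Y * W ≤ Z ∧ t • X ≤ Z ∧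
      Z.det = X.det * ∏ j, max (eigDesc hY j) t := by
  set Yt := cfc (fun s => max s t) Y
  have hYt : Yt.IsHermitian := IsSelfAdjoint.isHermitian (cfc_predicate _ Y)
  refine ⟨Wᴴ * Yt * W, isHermitian_conjTranspose_mul_mul W hYt, ?_, ?_, ?_⟩
  · have : Y ≤ Yt := by
      conv_lhs => rw [← cfc_id' ℝ Y hY.isSelfAdjoint]
      exact cfc_mono fun s _ => le_max_left s t
    simpa [star_eq_conjTranspose] using star_left_conjugate_le_conjugate this W
  · have : algebraMap ℝ _ t ≤ Yt := algebraMap_le_cfc _ t Y fun s _ => le_max_right s t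
    rw [Algebra.algebraMap_eq_smul_one] at this
    simpa [← hWX, star_eq_conjTranspose, Matrix.mul_assoc] using
      star_left_conjugate_le_conjugate this W
  · rw [← hWX, det_mul, det_mul, det_mul, det_eq_prod_eigDesc hYt,
      eigDesc_cfc_of_monotone hY (fun a b h => max_le_max_right t h) hYt]
    simp only [Function.comp_apply]
    ring

/-- The multiplicative Lidskii inequality. With `t = λₖ(Y)` and `Z'` from
`exists_isHermitian_ge_conj_and_ge_smul`, the terms `log (λᵢ(Z') / (t λᵢ(X)))` are nonnegative, so
their sum over `S` is at most their sum over all `i`, which determinants evaluate to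
`Σ_{j ≤ k} log (λⱼ(Y) / t)`. -/
theorem sum_log_eigDesc_sub_le {W X Y Z : Matrix (Fin n) (Fin n) ℝ} (hX : X.PosDef)
    (hY : Y.PosDef) (hZ : Z.PosDef) (hWX : Wᴴ * W = X) (hWZ : Wᴴ * Y * W = Z)
    {S : Finset (Fin n)} {k : Fin n} (hS : #S = #(Iic k)) :
    ∑ i ∈ S, (Real.log (eigDesc hZ.1 i) - Real.log (eigDesc hX.1 i)) ≤
      ∑ j ∈ Iic k, Real.log (eigDesc hY.1 j) := by
  set t := eigDesc hY.1 k
  have ht : 0 < t := eigDesc_pos hY k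
  obtain ⟨Zt, hZt, hZ_le, hX_le, hdet⟩ := exists_isHermitian_ge_conj_and_ge_smul hY.1 hWX t
  rw [hWZ] at hZ_le
  have hterm : ∀ i, 0 ≤ Real.log (eigDesc hZt i) - Real.log (eigDesc hX.1 i) - Real.log t := by
    intro i
    have hscale := eigDesc_le_eigDesc_of_le (hX.1.smul (IsSelfAdjoint.all t)) hZt hX_le i
    rw [eigDesc_smul hX.1 ht.le] at hscale
    have := Real.log_le_log (mul_pos ht (eigDesc_pos hX i)) hscale
    rw [Real.log_mul ht.ne' (eigDesc_pos hX i).ne'] at this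
    linarith
  have hprod_pos : 0 < ∏ j, max (eigDesc hY.1 j) t := prod_pos fun j _ => lt_max_of_lt_right ht
  have hlog : ∑ i, Real.log (eigDesc hZt i) =
      ∑ i, Real.log (eigDesc hX.1 i) + ∑ j, Real.log (max (eigDesc hY.1 j) t) := by
    rw [sum_log_eigDesc_of_det_ne_zero hZt (hdet ▸ (mul_pos hX.det_pos hprod_pos).ne'), hdet,
      Real.log_mul hX.det_pos.ne' hprod_pos.ne', sum_log_eigDesc hX,
      Real.log_prod fun j _ => (lt_max_of_lt_right ht).ne']
  calc ∑ i ∈ S, (Real.log (eigDesc hZ.1 i) - Real.log (eigDesc hX.1 i))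
      = ∑ i ∈ S, (Real.log (eigDesc hZ.1 i) - Real.log (eigDesc hX.1 i) - Real.log t)
          + #S * Real.log t := by
        simp [sum_sub_distrib]
    _ ≤ ∑ i ∈ S, (Real.log (eigDesc hZt i) - Real.log (eigDesc hX.1 i) - Real.log t)
          + #S * Real.log t := by
        gcongr with i
        · exact eigDesc_pos hZ i
        · exact eigDesc_le_eigDesc_of_le hZ.1 hZt hZ_le i
    _ ≤ ∑ i, (Real.log (eigDesc hZt i) - Real.log (eigDesc hX.1 i) - Real.log t)
          + #S * Real.log t := by
        gcongr
        · exact fun i _ _ => hterm i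
        · exact subset_univ S
    _ = ∑ j, (Real.log (max (eigDesc hY.1 j) t) - Real.log t) + #S * Real.log t := by
        simp only [sum_sub_distrib, hlog]
        ring
    _ = ∑ j ∈ Iic k, Real.log (eigDesc hY.1 j) := by
        rw [sum_sub_eq_sum_Iic_of_antitone (antitone_eigDesc hY.1) Real.log k, hS]
        simp [sum_sub_distrib, t]

theorem sum_comp_log_eigDesc_sub_le_of_conj {f g : ℝ → ℝ} (hfg : ∀ a b, f a + g a * (b - a) ≤ f b)
    {W X Y Z : Matrix (Fin n) (Fin n) ℝ} (hX : X.PosDef) (hY : Y.PosDef) (hZ : Z.PosDef)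
    (hWX : Wᴴ * W = X) (hWZ : Wᴴ * Y * W = Z) :
    ∑ i, f (Real.log (eigDesc hZ.1 i) - Real.log (eigDesc hX.1 i)) ≤
      ∑ i, f (Real.log (eigDesc hY.1 i)) := by
  set u := fun i => Real.log (eigDesc hZ.1 i) - Real.log (eigDesc hX.1 i)
  obtain ⟨σ, hσ⟩ := exists_perm_sortDesc_eq u
  rw [← sum_comp_sortDesc u f]
  refine sum_le_sum_of_sum_Iic_le hfg (antitone_sortDesc u) (fun k => ?_) ?_
  · have := sum_log_eigDesc_sub_le hX hY hZ hWX hWZ (S := (Iic k).map σ.toEmbedding) (card_map _)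
    rw [sum_map] at this
    rwa [hσ]
  · have hdet : Z.det = X.det * Y.det := by
      rw [← hWZ, ← hWX, det_mul, det_mul, det_mul]
      ring
    refine (sum_comp_sortDesc u id).trans ?_
    simp only [id, u, sum_sub_distrib]
    rw [sum_log_eigDesc hZ, sum_log_eigDesc hX, sum_log_eigDesc hY, hdet,
      Real.log_mul hX.det_pos.ne' hY.det_pos.ne', add_sub_cancel_left]

theorem sum_comp_log_eigDesc_le_of_conj {f g : ℝ → ℝ} (hfg : ∀ a b, f a + g a * (b - a) ≤ f b)
    {V X Y Z : Matrix (Fin n) (Fin n) ℝ} (hX : X.PosDef) (hY : Y.PosDef) (hZ : Z.PosDef)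
    (hVX : Vᴴ * V = X⁻¹) (hVZ : Vᴴ * Y * V = Z) :
    ∑ i, f (Real.log (eigDesc hZ.1 i)) ≤
      ∑ i, f (Real.log (eigDesc hY.1 i.rev) - Real.log (eigDesc hX.1 i)) := by
  have hlogX : ∑ i : Fin n, Real.log (eigDesc hX.1 i.rev) = Real.log X.det := by
    rw [← sum_log_eigDesc hX]
    exact Fintype.sum_equiv Fin.revPerm _ _ fun i => rfl
  calc ∑ i, f (Real.log (eigDesc hZ.1 i))
      ≤ ∑ i : Fin n, f (Real.log (eigDesc hY.1 i) - Real.log (eigDesc hX.1 i.rev)) := by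
        refine sum_le_sum_of_sum_Iic_le hfg
          (fun i j hij => Real.log_le_log (eigDesc_pos hZ j) (antitone_eigDesc hZ.1 hij))
          (fun k => ?_) ?_
        · have := sum_log_eigDesc_sub_le hX.inv hY hZ hVX hVZ (S := Iic k) rfl
          simp only [eigDesc_inv hX, Real.log_inv, sub_neg_eq_add, sum_add_distrib] at this
          rw [sum_sub_distrib]
          linarith
        · have hdet : Z.det = X⁻¹.det * Y.det := by
            rw [← hVZ, ← hVX, det_mul, det_mul, det_mul]
            ring
          rw [sum_log_eigDesc hZ, sum_sub_distrib, sum_log_eigDesc hY, hlogX, hdet,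
            Real.log_mul hX.inv.det_pos.ne' hY.det_pos.ne', det_nonsing_inv, Ring.inverse_eq_inv',
            Real.log_inv]
          ring
    _ = _ := Fintype.sum_equiv Fin.revPerm _ _ fun i => by simp

theorem tangent_le_exp_mul_sub_mul_sub_one (α a b : ℝ) :
    Real.exp (α * a) - α * a - 1 + (α * Real.exp (α * a) - α) * (b - a) ≤
      Real.exp (α * b) - α * b - 1 := by
  have := mul_le_mul_of_nonneg_left (Real.add_one_le_exp (α * b - α * a)) (Real.exp_pos (α * a)).le
  rw [← Real.exp_add, add_sub_cancel] at this
  linear_combination this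

theorem rpow_div_rpow_sub_log_sub_one {x y : ℝ} (hx : 0 < x) (hy : 0 < y) (α : ℝ) :
    x ^ α / y ^ α - Real.log (x ^ α / y ^ α) - 1 =
      Real.exp (α * (Real.log x - Real.log y)) - α * (Real.log x - Real.log y) - 1 := by
  rw [Real.rpow_def_of_pos hx, Real.rpow_def_of_pos hy, ← Real.exp_sub, Real.log_exp]
  ring_nf

section MatrixPower

variable {A M : Matrix (Fin n) (Fin n) ℝ}

theorem mPow_eq_rpow (hA : A.PosSemidef) (q : ℝ) : mPow A q = A ^ q :=
  (CFC.rpow_eq_cfc_real hA.nonneg).symm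

theorem Matrix.conjTranspose_rpow (A : Matrix (Fin n) (Fin n) ℝ) (p : ℝ) : (A ^ p)ᴴ = A ^ p :=
  CFC.rpow_nonneg.isSelfAdjoint

theorem Matrix.PosDef.conjTranspose_rpow_mul_rpow (hA : A.PosDef) (p q : ℝ) :
    (A ^ p)ᴴ * A ^ q = A ^ (p + q) := by
  rw [conjTranspose_rpow, CFC.rpow_add hA.isStrictlyPositive.isUnit]

theorem Matrix.PosDef.rpow_mul_mul_rpow (hA : A.PosDef) {B : Matrix (Fin n) (Fin n) ℝ}
    (hB : B.PosDef) (p : ℝ) : (A ^ p * B * A ^ p).PosDef := by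
  have := hB.conjTranspose_mul_mul_same
    (mulVec_injective_iff_isUnit.mpr (hA.isStrictlyPositive.isUnit.cfcRpow p))
  rwa [conjTranspose_rpow] at this

theorem Matrix.PosDef.rpow_neg_one (hA : A.PosDef) : A ^ (-1 : ℝ) = A⁻¹ := by
  rw [nonsing_inv_eq_ringInverse, CFC.inverse_eq_rpow_neg_one hA.isStrictlyPositive]

theorem trace_mPow_sub_log_det_eq_sum (hM : M.PosDef) (α : ℝ) :
    (mPow M α).trace - n - α * Real.log M.det =
      ∑ i, (Real.exp (α * Real.log (eigDesc hM.1 i)) - α * Real.log (eigDesc hM.1 i) - 1) := by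
  rw [mPow, trace_cfc_eq_sum_eigDesc hM.1, ← sum_log_eigDesc hM, mul_sum,
    show (n : ℝ) = ∑ _i : Fin n, 1 by simp, ← sum_sub_distrib, ← sum_sub_distrib]
  refine sum_congr rfl fun i _ => ?_
  rw [Real.rpow_def_of_pos (eigDesc_pos hM i), mul_comm]
  ring

end MatrixPower

/-- `Tr((BA⁻¹)^α)` is computed as `Tr((A^{-1/2} B A^{-1/2})^α)`; the two matrices are similar. -/
theorem ab_logdet_divergence_bounds_general {n : ℕ} {A B : Matrix (Fin n) (Fin n) ℝ}
    (hA : A.PosDef) (hB : B.PosDef) (α : ℝ) :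
    (1 / α ^ 2) *
          ∑ i, (eigDesc hB.1 i ^ α / eigDesc hA.1 i ^ α -
            Real.log (eigDesc hB.1 i ^ α / eigDesc hA.1 i ^ α) - 1) ≤
        (1 / α ^ 2) *
          (((mPow (mPow A (-(1 / 2)) * B * mPow A (-(1 / 2))) α).trace - (n : ℝ)) -
            α * Real.log (B * A⁻¹).det) ∧
      (1 / α ^ 2) *
          (((mPow (mPow A (-(1 / 2)) * B * mPow A (-(1 / 2))) α).trace - (n : ℝ)) -
            α * Real.log (B * A⁻¹).det) ≤
        (1 / α ^ 2) *
          ∑ i, (eigDesc hB.1 i.rev ^ α / eigDesc hA.1 i ^ α -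
            Real.log (eigDesc hB.1 i.rev ^ α / eigDesc hA.1 i ^ α) - 1) := by
  rw [mPow_eq_rpow hA.posSemidef]
  set R := A ^ (-(1 / 2) : ℝ)
  set Q := A ^ (1 / 2 : ℝ)
  set M := R * B * R
  have hRsa : Rᴴ = R := conjTranspose_rpow A _
  have hM : M.PosDef := hA.rpow_mul_mul_rpow hB _
  have hRR : Rᴴ * R = A⁻¹ := by
    rw [hA.conjTranspose_rpow_mul_rpow, ← hA.rpow_neg_one]
    norm_num
  have hQQ : Qᴴ * Q = A := by
    rw [hA.conjTranspose_rpow_mul_rpow]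
    norm_num [CFC.rpow_one A hA.posSemidef.nonneg]
  have hQM : Qᴴ * M * Q = B := by
    rw [show Qᴴ * M * Q = (Qᴴ * R) * B * (Rᴴ * Q) by simp only [M, hRsa, Matrix.mul_assoc],
      hA.conjTranspose_rpow_mul_rpow, hA.conjTranspose_rpow_mul_rpow]
    norm_num [CFC.rpow_zero A hA.posSemidef.nonneg]
  have hdet : (B * A⁻¹).det = M.det := by
    rw [← hRR, hRsa]
    simp only [M, det_mul]
    ring
  simp only [hdet, trace_mPow_sub_log_det_eq_sum hM,
    rpow_div_rpow_sub_log_sub_one (eigDesc_pos hB _) (eigDesc_pos hA _)]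
  have hg := tangent_le_exp_mul_sub_mul_sub_one α
  exact ⟨mul_le_mul_of_nonneg_left (sum_comp_log_eigDesc_sub_le_of_conj hg hA hM hB hQQ hQM)
      (by positivity),
    mul_le_mul_of_nonneg_left (sum_comp_log_eigDesc_le_of_conj hg hA hB hM hRR (by rw [hRsa]))
      (by positivity)⟩

/-- Bounds on the Alpha-Beta log-det divergence `D_{α,0}(A‖B)`, where
`Tr((BA⁻¹)^α)` is computed as `Tr((A^{-1/2} B A^{-1/2})^α)` (the two matrices
are similar, hence have the same eigenvalues and trace). -/
theorem ab_logdet_divergence_bounds {n : ℕ} {A B : Matrix (Fin n) (Fin n) ℝ}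
    (hA : A.PosDef) (hB : B.PosDef) (α : ℝ) (hα : α ≠ 0) :
    (1 / α ^ 2) *
          ∑ i, (eigDesc hB.1 i ^ α / eigDesc hA.1 i ^ α -
            Real.log (eigDesc hB.1 i ^ α / eigDesc hA.1 i ^ α) - 1) ≤
        (1 / α ^ 2) *
          (((mPow (mPow A (-(1 / 2)) * B * mPow A (-(1 / 2))) α).trace - (n : ℝ)) -
            α * Real.log (B * A⁻¹).det) ∧
      (1 / α ^ 2) *
          (((mPow (mPow A (-(1 / 2)) * B * mPow A (-(1 / 2))) α).trace - (n : ℝ)) -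
            α * Real.log (B * A⁻¹).det) ≤
        (1 / α ^ 2) *
          ∑ i, (eigDesc hB.1 i.rev ^ α / eigDesc hA.1 i ^ α -
            Real.log (eigDesc hB.1 i.rev ^ α / eigDesc hA.1 i ^ α) - 1) :=
  ab_logdet_divergence_bounds_general hA hB α
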